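/- arXiv:2406.06513 — 5 statements merged into one kernel-verified Lean document; each statement's English description precedes it below -/
import Mathlib

section
/- The Thue–Morse sequence t, the fixed point starting with 0 of the morphism μ defined by μ(0)=01, μ(1)=10, contains no factor of exponent strictly greater than 2; that is, t is overlap-free. -/
/-- The Thue–Morse sequence: parity of the number of 1s in the binary expansion of `n`. -/
def tm (n : ℕ) : ℕ := ((Nat.digits 2 n).count 1) % 2

lemma tm_lt (n : ℕ) : tm n < 2 := Nat.mod_lt _ (by norm_num)

lemma tm_two_mul (n : ℕ) : tm (2 * n) = tm n := by
  rcases Nat.eq_zero_or_pos n with h | h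
  · subst h; rfl
  · unfold tm
    rw [Nat.digits_def' (by norm_num : 1 < 2) (by omega)]
    simp [Nat.mul_div_cancel_left, List.count_cons]

lemma tm_odd_ne (n : ℕ) : tm (2 * n + 1) ≠ tm (2 * n) := by
  have h1 : Nat.digits 2 (2 * n + 1) = 1 :: Nat.digits 2 n := by
    rw [Nat.digits_def' (by norm_num : 1 < 2) (by omega)]
    congr 1
    · omega
    · congr 1; omega
  have h2 := tm_two_mul n
  unfold tm at *
  rw [h1]
  simp [List.count_cons]
  omega

lemma odd_case (i p : ℕ) (hp : Odd p) (h : ∀ j ≤ p, tm (i + j) = tm (i + j + p)) :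
    False := by
  have hp1 : 1 ≤ p := hp.pos
  -- alternation: for j ≤ p - 1, tm (i+j+1) ≠ tm (i+j)
  have alt : ∀ j, j + 1 ≤ p → tm (i + j + 1) ≠ tm (i + j) := by
    intro j hj
    rcases Nat.even_or_odd (i + j) with ⟨m, hm⟩ | ⟨m, hm⟩
    · have : i + j = 2 * m := by omega
      rw [this]
      exact tm_odd_ne m
    · -- i + j odd, so i + j + p even
      obtain ⟨k, hk⟩ := hp
      have e1 : i + j + p = 2 * (m + k + 1) := by omega
      have h1 := h j (by omega)
      have h2 := h (j + 1) hj
      rw [show i + (j+1) = i + j + 1 by ring] at h2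
      rw [h1, h2, e1, show i + j + 1 + p = 2 * (m + k + 1) + 1 by omega]
      exact tm_odd_ne _
  -- hence tm (i + j) = (tm i + j) % 2 for j ≤ p
  have key : ∀ j, j ≤ p → tm (i + j) = (tm i + j) % 2 := by
    intro j
    induction j with
    | zero => intro _; simpa using (Nat.mod_eq_of_lt (tm_lt i)).symm
    | succ j ih =>
      intro hj
      have hij := ih (by omega)
      have ha := alt j hj
      rw [hij] at ha
      have l1 := tm_lt (i + j + 1)
      have l2 := tm_lt i
      rw [show i + (j+1) = i + j + 1 by ring]
      omega
  have hk0 := key p le_rfl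
  have h0 := h 0 (by omega)
  simp at h0
  obtain ⟨k, hk⟩ := hp
  have := tm_lt i
  rw [h0] at hk0
  omega

/-- `tm` is overlap-free: it contains no factor of the form `axaxa`,
equivalently no factor of length `2p+1` with period `p` (exponent `> 2`). -/
theorem thue_morse_overlap_free :
    ¬ ∃ i p : ℕ, 1 ≤ p ∧ ∀ j ≤ p, tm (i + j) = tm (i + j + p) := by
  rintro ⟨i, p, hp, h⟩
  induction p using Nat.strong_induction_on generalizing i with
  | _ p ih =>
  rcases Nat.even_or_odd p with ⟨q, hq⟩ | hodd
  · -- p even, p = 2q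
    have hq2 : p = 2 * q := by omega
    have hq1 : 1 ≤ q := by omega
    rcases Nat.even_or_odd i with ⟨m, hm⟩ | ⟨m, hm⟩
    · -- i = 2m
      refine ih q (by omega) m hq1 ?_
      intro j hj
      have h1 := h (2 * j) (by omega)
      have e1 : i + 2 * j = 2 * (m + j) := by omega
      rw [e1, show 2 * (m + j) + p = 2 * (m + j + q) by omega,
        tm_two_mul, tm_two_mul] at h1
      simpa using h1
    · -- i = 2m + 1
      refine ih q (by omega) m hq1 ?_
      intro j hj
      have h1 := h (2 * j) (by omega)
      have e1 : i + 2 * j = 2 * (m + j) + 1 := by omega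
      rw [e1, show 2 * (m + j) + 1 + p = 2 * (m + j + q) + 1 by omega] at h1
      have n1 := tm_odd_ne (m + j)
      have n2 := tm_odd_ne (m + j + q)
      have := tm_lt (2 * (m + j))
      have := tm_lt (2 * (m + j) + 1)
      have := tm_lt (2 * (m + j + q))
      have := tm_lt (2 * (m + j + q) + 1)
      have e3 := tm_two_mul (m + j)
      have e4 := tm_two_mul (m + j + q)
      omega
  · exact odd_case i p hodd h
end

section
/- The critical exponent of the Thue–Morse sequence is exactly 2: it contains squares (factors of exponent 2) but no factor of exponent greater than 2. -/
lemma tm_even (n : ℕ) : tm (2*n) = tm n := by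
  rcases Nat.eq_zero_or_pos n with h|h
  · simp [h]
  · unfold tm
    rw [Nat.digits_def' (by norm_num : 1 < 2) (by omega)]
    have h1 : (2*n) % 2 = 0 := by omega
    have h2 : (2*n) / 2 = n := by omega
    rw [h1, h2]
    simp [List.count_cons]

lemma tm_odd (n : ℕ) : tm (2*n+1) = (tm n + 1) % 2 := by
  unfold tm
  rw [Nat.digits_def' (by norm_num : 1 < 2) (by omega)]
  have h1 : (2*n+1) % 2 = 1 := by omega
  have h2 : (2*n+1) / 2 = n := by omega
  rw [h1, h2]
  simp [List.count_cons]

lemma tm_adj (n : ℕ) : tm (2*n) ≠ tm (2*n+1) := by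
  rw [tm_even, tm_odd]
  have := tm_lt n
  omega

/-- If tm differs at an odd position and its successor, then tm agrees at the halves. -/
lemma half_eq (m : ℕ) (h : tm (2*m+1) ≠ tm (2*m+2)) : tm m = tm (m+1) := by
  have h1 := tm_odd m
  have h2 : tm (2*m+2) = tm (m+1) := by
    have := tm_even (m+1); rw [show 2*(m+1) = 2*m+2 by ring] at this; exact this
  have := tm_lt m
  have := tm_lt (m+1)
  omega

lemma no_three (m : ℕ) : ¬ (tm m = tm (m+1) ∧ tm (m+1) = tm (m+2)) := by
  rintro ⟨h1, h2⟩
  rcases Nat.even_or_odd m with ⟨a, ha⟩ | ⟨a, ha⟩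
  · have := tm_adj a
    rw [show 2*a = m by omega] at this
    exact this h1
  · have := tm_adj (a+1)
    rw [show 2*(a+1) = m+1 by omega] at this
    rw [show m+1+1 = m+2 by omega] at this
    exact this h2

lemma no_overlap : ∀ p, 1 ≤ p → ∀ i, ¬ ∀ j ≤ p, tm (i + j) = tm (i + j + p) := by
  intro p
  induction p using Nat.strong_induction_on with
  | _ p ih =>
    intro hp i h
    rcases Nat.even_or_odd p with ⟨q, hq⟩ | ⟨r, hr⟩
    · -- even case: p = 2q, halve
      have hq1 : 1 ≤ q := by omega
      apply ih q (by omega) hq1 (i/2)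
      intro j hj
      rcases Nat.even_or_odd i with ⟨a, ha⟩ | ⟨a, ha⟩
      · have key := h (2*j) (by omega)
        rw [show i + 2*j = 2*(a+j) by omega, show 2*(a+j) + p = 2*(a+j+q) by omega,
          tm_even, tm_even] at key
        rw [show i/2 + j = a + j by omega, show a + j + q = a+j+q by omega]
        exact key
      · have key := h (2*j) (by omega)
        rw [show i + 2*j = 2*(a+j)+1 by omega, show 2*(a+j)+1 + p = 2*(a+j+q)+1 by omega,
          tm_odd, tm_odd] at key
        have b1 := tm_lt (a+j)
        have b2 := tm_lt (a+j+q)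
        rw [show i/2 + j = a + j by omega, show a + j + q = a+j+q by omega]
        omega
    · -- odd case: p = 2r+1
      rcases Nat.eq_zero_or_pos r with hr0 | hr1
      · -- p = 1
        have h0 := h 0 (by omega)
        have h1 := h 1 (by omega)
        apply no_three i
        constructor
        · rw [show i + 0 = i by omega, show i + p = i + 1 by omega] at h0; exact h0
        · rw [show i + 1 + p = i + 2 by omega] at h1; exact h1
      · -- p ≥ 3
        have claim : ∀ m, i ≤ 2*m+1 → 2*m+2 ≤ i + 2*p → tm m = tm (m+1) := by
          intro m hm1 hm2
          apply half_eq
          by_cases hc : 2*m+2 ≤ i + p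
          · have k1 := h (2*m+1-i) (by omega)
            have k2 := h (2*m+2-i) (by omega)
            rw [show i + (2*m+1-i) = 2*m+1 by omega,
              show 2*m+1 + p = 2*(m+r+1) by omega] at k1
            rw [show i + (2*m+2-i) = 2*m+2 by omega,
              show 2*m+2 + p = 2*(m+r+1)+1 by omega] at k2
            have := tm_adj (m+r+1)
            omega
          ·
            have k1 := h (2*(m-r)-i) (by omega)
            have k2 := h (2*(m-r)+1-i) (by omega)
            rw [show i + (2*(m-r)-i) = 2*(m-r) by omega,
              show 2*(m-r) + p = 2*m+1 by omega] at k1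
            rw [show i + (2*(m-r)+1-i) = 2*(m-r)+1 by omega,
              show 2*(m-r)+1 + p = 2*m+2 by omega] at k2
            have := tm_adj (m-r)
            omega
        have c1 := claim (i/2) (by omega) (by omega)
        have c2 := claim (i/2+1) (by omega) (by omega)
        exact no_three (i/2) ⟨c1, by rw [show i/2+1+1 = i/2+2 by ring] at c2; exact c2⟩

/-- The critical exponent of Thue–Morse is exactly 2: it contains a square
(a factor of length `2p` with period `p`, i.e. exponent `2`), but no factor of
exponent greater than `2` (no factor of length `2p+1` with period `p`). -/
theorem thue_morse_critical_exponent_two :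
    (∃ i p : ℕ, 1 ≤ p ∧ ∀ j < p, tm (i + j) = tm (i + j + p)) ∧
    (¬ ∃ i p : ℕ, 1 ≤ p ∧ ∀ j ≤ p, tm (i + j) = tm (i + j + p)) := by
  constructor
  · refine ⟨1, 1, le_refl 1, ?_⟩
    intro j hj
    interval_cases j
    have := tm_even 1
    norm_num at this ⊢
    omega
  · rintro ⟨i, p, hp, h⟩
    exact no_overlap p hp i h
end

section
/- The morphism f on {0,1,2,3} defined by f(0)=021, f(1)=031, f(2)=012, f(3)=013 has an infinite fixed point starting with 0, and this fixed point is squarefree. -/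
/-- The morphism f(0)=021, f(1)=031, f(2)=012, f(3)=013. -/
def f : Fin 4 → List (Fin 4)
  | 0 => [0, 2, 1]
  | 1 => [0, 3, 1]
  | 2 => [0, 1, 2]
  | 3 => [0, 1, 3]

/-- An infinite word is squarefree if it contains no nonempty factor `xx`. -/
def SquarefreeSeq {α : Type} (x : ℕ → α) : Prop :=
  ¬ ∃ i p : ℕ, 1 ≤ p ∧ ∀ j < p, x (i + j) = x (i + j + p)

/-- The fixed point of `f`. -/
def xw : ℕ → Fin 4
  | 0 => 0
  | n+1 => (f (xw ((n+1)/3))).getD ((n+1)%3) 0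
  decreasing_by exact Nat.div_lt_self (Nat.succ_pos n) (by norm_num)

lemma xw_eq (n r : ℕ) (hr : r < 3) : xw (3*n+r) = (f (xw n)).getD r 0 := by
  rcases Nat.eq_zero_or_pos (3*n+r) with h | h
  · have hn : n = 0 := by omega
    have hr0 : r = 0 := by omega
    subst hn; subst hr0
    simp [xw, f]
  · obtain ⟨m, hm⟩ := Nat.exists_eq_succ_of_ne_zero (by omega : 3*n+r ≠ 0)
    rw [hm, xw]
    have h1 : (m+1)/3 = n := by omega
    have h2 : (m+1)%3 = r := by omega
    rw [h1, h2]

lemma f_getD0 : ∀ a : Fin 4, (f a).getD 0 0 = 0 := by decide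
lemma f_getD1_ne : ∀ a : Fin 4, (f a).getD 1 0 ≠ 0 := by decide
lemma f_getD2_ne : ∀ a : Fin 4, (f a).getD 2 0 ≠ 0 := by decide
lemma inj12 : ∀ a b : Fin 4, (f a).getD 1 0 = (f b).getD 1 0 →
    (f a).getD 2 0 = (f b).getD 2 0 → a = b := by decide
lemma inj2 : ∀ a b : Fin 4, (f a).getD 2 0 ≠ 1 →
    (f a).getD 2 0 = (f b).getD 2 0 → a = b := by decide
lemma inj1 : ∀ a b : Fin 4, (f a).getD 2 0 = 1 →
    (f a).getD 1 0 = (f b).getD 1 0 → a = b := by decide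
lemma ne12 : ∀ a : Fin 4, (f a).getD 1 0 ≠ (f a).getD 2 0 := by decide

lemma xw_zero_iff (n : ℕ) : xw n = 0 ↔ n % 3 = 0 := by
  have h := xw_eq (n/3) (n%3) (Nat.mod_lt _ (by norm_num))
  rw [Nat.div_add_mod] at h
  constructor
  · intro h0
    by_contra hm
    rcases (by omega : n % 3 = 1 ∨ n % 3 = 2) with h1 | h1 <;> rw [h1] at h
    · exact f_getD1_ne _ (h ▸ h0)
    · exact f_getD2_ne _ (h ▸ h0)
  · intro h0
    rw [h0] at h
    rw [h, f_getD0]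

lemma blocks (a q : ℕ)
    (h1 : ∀ j < q, xw (3*(a+j)+1) = xw (3*(a+j+q)+1))
    (h2 : ∀ j < q, xw (3*(a+j)+2) = xw (3*(a+j+q)+2)) :
    ∀ j < q, xw (a+j) = xw (a+j+q) := by
  intro j hj
  have e1 := h1 j hj
  have e2 := h2 j hj
  rw [xw_eq _ 1 (by norm_num), xw_eq _ 1 (by norm_num)] at e1
  rw [xw_eq _ 2 (by norm_num), xw_eq _ 2 (by norm_num)] at e2
  exact inj12 _ _ e1 e2

lemma no_square : ∀ p, 0 < p → ∀ i, ¬ (∀ j < p, xw (i+j) = xw (i+j+p)) := by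
  intro p
  induction p using Nat.strong_induction_on with
  | _ p IH =>
  intro hp i hsq
  by_cases hp3 : p % 3 = 0
  · -- p = 3q, reduce to a square at the block level
    obtain ⟨q, rfl⟩ : ∃ q, p = 3*q := ⟨p/3, by omega⟩
    have hq : 0 < q := by omega
    rcases (by omega : i % 3 = 0 ∨ i % 3 = 1 ∨ i % 3 = 2) with h | h | h
    · obtain ⟨a, rfl⟩ : ∃ a, i = 3*a := ⟨i/3, by omega⟩
      refine IH q (by omega) hq a (blocks a q ?_ ?_)
      · intro j hj
        have := hsq (3*j+1) (by omega)
        have e1 : 3*a + (3*j+1) = 3*(a+j)+1 := by ring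
        have e2 : 3*a + (3*j+1) + 3*q = 3*(a+j+q)+1 := by ring
        rwa [e2, e1] at this
      · intro j hj
        have := hsq (3*j+2) (by omega)
        have e1 : 3*a + (3*j+2) = 3*(a+j)+2 := by ring
        have e2 : 3*a + (3*j+2) + 3*q = 3*(a+j+q)+2 := by ring
        rwa [e2, e1] at this
    · obtain ⟨a, rfl⟩ : ∃ a, i = 3*a+1 := ⟨i/3, by omega⟩
      refine IH q (by omega) hq a (blocks a q ?_ ?_)
      · intro j hj
        have := hsq (3*j) (by omega)
        have e1 : 3*a+1 + (3*j) = 3*(a+j)+1 := by ring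
        have e2 : 3*a+1 + (3*j) + 3*q = 3*(a+j+q)+1 := by ring
        rwa [e2, e1] at this
      · intro j hj
        have := hsq (3*j+1) (by omega)
        have e1 : 3*a+1 + (3*j+1) = 3*(a+j)+2 := by ring
        have e2 : 3*a+1 + (3*j+1) + 3*q = 3*(a+j+q)+2 := by ring
        rwa [e2, e1] at this
    · obtain ⟨a, rfl⟩ : ∃ a, i = 3*a+2 := ⟨i/3, by omega⟩
      -- third letters of blocks a and a+q agree
      have h0 := hsq 0 (by omega)
      have e1 : 3*a+2 + 0 = 3*a+2 := by ring
      have e2 : 3*a+2 + 0 + 3*q = 3*(a+q)+2 := by ring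
      rw [e2, e1, xw_eq a 2 (by norm_num), xw_eq (a+q) 2 (by norm_num)] at h0
      by_cases hA : (f (xw a)).getD 2 0 = 1
      · -- x a, x (a+q) ∈ {0,1}; show x (a+q) = x (a+2q), square at blocks a+1
        have hB0 : (f (xw (a+q))).getD 2 0 = 1 := by rw [← h0]; exact hA
        have hB1 : (f (xw (a+q))).getD 1 0 = (f (xw (a+2*q))).getD 1 0 := by
          have := hsq (3*q-1) (by omega)
          have e1 : 3*a+2 + (3*q-1) = 3*(a+q)+1 := by omega
          have e2 : 3*a+2 + (3*q-1) + 3*q = 3*(a+2*q)+1 := by omega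
          rw [e2, e1, xw_eq (a+q) 1 (by norm_num),
            xw_eq (a+2*q) 1 (by norm_num)] at this
          exact this
        have hEq : xw (a+q) = xw (a+2*q) := inj1 _ _ hB0 hB1
        refine IH q (by omega) hq (a+1) (blocks (a+1) q ?_ ?_)
        · intro j hj
          have := hsq (3*j+2) (by omega)
          have e1 : 3*a+2 + (3*j+2) = 3*(a+1+j)+1 := by ring
          have e2 : 3*a+2 + (3*j+2) + 3*q = 3*(a+1+j+q)+1 := by ring
          rwa [e2, e1] at this
        · intro j hj
          by_cases hjq : j + 1 < q
          · have := hsq (3*j+3) (by omega)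
            have e1 : 3*a+2 + (3*j+3) = 3*(a+1+j)+2 := by ring
            have e2 : 3*a+2 + (3*j+3) + 3*q = 3*(a+1+j+q)+2 := by ring
            rwa [e2, e1] at this
          · have ej1 : a+1+j = a+q := by omega
            have ej2 : a+1+j+q = a+2*q := by omega
            rw [ej2, ej1, xw_eq (a+q) 2 (by norm_num),
              xw_eq (a+2*q) 2 (by norm_num), hEq]
      · -- third letter determines the letter: x a = x (a+q), square at blocks a
        have hA0 : xw a = xw (a+q) := inj2 _ _ hA h0
        refine IH q (by omega) hq a (blocks a q ?_ ?_)
        · intro j hj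
          by_cases hj0 : j = 0
          · subst hj0
            simp only [Nat.add_zero]
            rw [xw_eq a 1 (by norm_num), xw_eq (a+q) 1 (by norm_num), hA0]
          · have := hsq (3*j-1) (by omega)
            have e1 : 3*a+2 + (3*j-1) = 3*(a+j)+1 := by omega
            have e2 : 3*a+2 + (3*j-1) + 3*q = 3*(a+j+q)+1 := by omega
            rwa [e2, e1] at this
        · intro j hj
          have := hsq (3*j) (by omega)
          have e1 : 3*a+2 + (3*j) = 3*(a+j)+2 := by ring
          have e2 : 3*a+2 + (3*j) + 3*q = 3*(a+j+q)+2 := by ring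
          rwa [e2, e1] at this
  · -- p not a multiple of 3
    have key : ∀ j < p, ¬ ((i+j) % 3 = 0 ∨ (i+j+p) % 3 = 0) := by
      intro j hj hc
      have hs := hsq j hj
      rcases hc with hc | hc
      · have h1 : xw (i+j) = 0 := (xw_zero_iff _).2 hc
        have h2 : (i+j+p) % 3 = 0 := (xw_zero_iff _).1 (hs ▸ h1)
        omega
      · have h1 : xw (i+j+p) = 0 := (xw_zero_iff _).2 hc
        have h2 : (i+j) % 3 = 0 := (xw_zero_iff _).1 (hs ▸ h1)
        omega
    by_cases hc0 : i % 3 = 0 ∨ (i+p) % 3 = 0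
    · exact key 0 (by omega) (by omega)
    · push_neg at hc0
      by_cases hp1 : p = 1
      · -- then i % 3 = 1: x i and x (i+1) are letters 1 and 2 of the same block
        have hi1 : i % 3 = 1 := by omega
        obtain ⟨a, rfl⟩ : ∃ a, i = 3*a+1 := ⟨i/3, by omega⟩
        have hs := hsq 0 (by omega)
        have e1 : 3*a+1 + 0 = 3*a+1 := by ring
        have e2 : 3*a+1 + 0 + p = 3*a+2 := by omega
        rw [e2, e1, xw_eq a 1 (by norm_num), xw_eq a 2 (by norm_num)] at hs
        exact ne12 _ hs
      · exact key 1 (by omega) (by omega)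

/-- `f` has an infinite fixed point starting with `0` (since `f` is `3`-uniform,
being a fixed point means `x (3n + r) = (f (x n))[r]` for `r < 3`), and this
fixed point is squarefree. -/
theorem f_fixed_point_squarefree :
    ∃ x : ℕ → Fin 4, x 0 = 0 ∧
      (∀ n : ℕ, ∀ r < 3, x (3 * n + r) = (f (x n)).getD r 0) ∧
      SquarefreeSeq x := by
  refine ⟨xw, by simp [xw], fun n r hr => xw_eq n r hr, ?_⟩
  rintro ⟨i, p, hp, hsq⟩
  exact no_square p hp i hsq
end

section
/- Every infinite 7/3-free binary word contains the factor μ^i(0) and the factor μ^i(1) for all i ≥ 0, where μ is the Thue–Morse morphism. -/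
/-- An infinite binary word is 7/3-free if it contains no finite factor of
exponent ≥ 7/3, i.e. no factor of length `n` with a period `p` with `3n ≥ 7p`. -/
def SevenThirdsFree (x : ℕ → Fin 2) : Prop :=
  ¬ ∃ i n p : ℕ, 1 ≤ p ∧ p ≤ n ∧ 3 * n ≥ 7 * p ∧
      ∀ j : ℕ, j + p < n → x (i + j) = x (i + j + p)

/-- The Thue–Morse morphism applied to a finite binary word. -/
def muList (w : List (Fin 2)) : List (Fin 2) :=
  w.flatMap fun a => [a, 1 - a]

/-- The finite word `L` occurs as a factor of the infinite word `x`. -/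
def Occurs (L : List (Fin 2)) (x : ℕ → Fin 2) : Prop :=
  ∃ j : ℕ, ∀ m < L.length, x (j + m) = L.getD m 0

/-!
Call `n` a square position of `x` if `x n = x (n + 1)`. A 7/3-free binary word contains no cube
`aaa` and no factor `abbabba = (abb)^(7/3)`, while every factor `ababa` of length 5 is a 5/2-power;
so after a square position `n ≥ 1` the next one is `n + 2` or `n + 4`, and all square positions
`≥ 1` have the same parity. Hence from position 1 or 2 on, `x` is cut into blocks `a (1 - a)`,
i.e. `x = p μ(y)`, and `y` is again 7/3-free because μ doubles periods. Since
`μ^(i+1)(a) = μ(μ^i(a))`, induction on `i` reduces the theorem to the case `i = 0`: both letters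
occur, since a constant word is a cube.
-/

/-- `x = p μ(y)` with `|p| = o` and `y k = x (o + 2 * k)`. -/
def IsMuImageAfter (x : ℕ → Fin 2) (o : ℕ) : Prop :=
  ∀ k, x (o + 2 * k + 1) = 1 - x (o + 2 * k)

namespace SevenThirdsFree

variable {x : ℕ → Fin 2}

theorem not_cube (hx : SevenThirdsFree x) (n : ℕ) (h₀ : x n = x (n + 1))
    (h₁ : x (n + 1) = x (n + 2)) : False := by
  refine hx ⟨n, 3, 1, le_rfl, by norm_num, by norm_num, fun j hj => ?_⟩
  have : j < 2 := by omega
  interval_cases j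
  exacts [h₀, h₁]

theorem exists_eq_succ_of_le_three (hx : SevenThirdsFree x) (n : ℕ) :
    ∃ k ≤ 3, x (n + k) = x (n + k + 1) := by
  by_contra! h
  have alternate : ∀ a b c : Fin 2, a ≠ b → b ≠ c → a = c := by decide
  refine hx ⟨n, 5, 2, by norm_num, by norm_num, by norm_num, fun j hj => ?_⟩
  exact alternate _ _ _ (h j (by omega)) (h (j + 1) (by omega))

theorem not_eq_succ_add_three (hx : SevenThirdsFree x) {n : ℕ} (hn : 1 ≤ n)
    (h : x n = x (n + 1)) : x (n + 3) ≠ x (n + 4) := by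
  intro h₃
  obtain ⟨m, rfl⟩ : ∃ m, n = m + 1 := ⟨n - 1, by omega⟩
  have h₀ : x m ≠ x (m + 1) := fun h₀ => hx.not_cube m h₀ h
  have h₂ : x (m + 2) ≠ x (m + 3) := fun h₂ => hx.not_cube (m + 1) h h₂
  have h₃' : x (m + 3) ≠ x (m + 4) := fun h₃' => hx.not_cube (m + 3) h₃' h₃
  have h₅ : x (m + 5) ≠ x (m + 6) := fun h₅ => hx.not_cube (m + 4) h₃ h₅
  have abbabba : ∀ a b c d e f g : Fin 2, a ≠ b → b = c → c ≠ d → d ≠ e → e = f → f ≠ g →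
      a = d ∧ b = e ∧ c = f ∧ d = g := by decide
  obtain ⟨e₀, e₁, e₂, e₃⟩ := abbabba _ _ _ _ _ _ _ h₀ h h₂ h₃' h₃ h₅
  refine hx ⟨m, 7, 3, by norm_num, by norm_num, by norm_num, fun j hj => ?_⟩
  have : j < 4 := by omega
  interval_cases j
  exacts [e₀, e₁, e₂, e₃]

theorem eq_succ_add_two_or_add_four (hx : SevenThirdsFree x) {n : ℕ} (hn : 1 ≤ n)
    (h : x n = x (n + 1)) : x (n + 2) = x (n + 3) ∨ x (n + 4) = x (n + 5) := by
  obtain ⟨k, hk, hsq⟩ := hx.exists_eq_succ_of_le_three (n + 1)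
  interval_cases k
  · exact (hx.not_cube n h hsq).elim
  · exact .inl hsq
  · exact (hx.not_eq_succ_add_three hn h hsq).elim
  · exact .inr hsq

theorem mod_two_eq_zero_of_eq_succ_of_eq_succ_add (hx : SevenThirdsFree x) (d : ℕ) :
    ∀ n, 1 ≤ n → x n = x (n + 1) → x (n + d) = x (n + d + 1) → d % 2 = 0 := by
  induction d using Nat.strong_induction_on with
  | _ d ih =>
  intro n hn h hd
  rcases Nat.lt_or_ge d 4 with hd4 | hd4
  · interval_cases d
    · rfl
    · exact (hx.not_cube n h hd).elim
    · rfl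
    · exact (hx.not_eq_succ_add_three hn h hd).elim
  rcases hx.eq_succ_add_two_or_add_four hn h with h₂ | h₄
  · have := ih (d - 2) (by omega) (n + 2) (by omega) h₂
      (by rwa [show n + 2 + (d - 2) = n + d by omega])
    omega
  · have := ih (d - 4) (by omega) (n + 4) (by omega) h₄
      (by rwa [show n + 4 + (d - 4) = n + d by omega])
    omega

theorem mod_two_eq_of_eq_succ (hx : SevenThirdsFree x) {m n : ℕ} (hm : 1 ≤ m) (hn : 1 ≤ n)
    (hsq_m : x m = x (m + 1)) (hsq_n : x n = x (n + 1)) : m % 2 = n % 2 := by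
  wlog hmn : m ≤ n generalizing m n
  · exact (this hn hm hsq_n hsq_m (by omega)).symm
  obtain ⟨d, rfl⟩ := Nat.exists_eq_add_of_le hmn
  have := hx.mod_two_eq_zero_of_eq_succ_of_eq_succ_add d m hm hsq_m hsq_n
  omega

theorem exists_isMuImageAfter (hx : SevenThirdsFree x) : ∃ o, IsMuImageAfter x o := by
  obtain ⟨k, -, hsq⟩ := hx.exists_eq_succ_of_le_three 1
  -- `o ≥ 1` has the parity opposite to that of the square position `1 + k`
  refine ⟨1 + (1 + k) % 2, fun j => ?_⟩
  by_contra hne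
  have eq_of_ne_one_sub : ∀ a b : Fin 2, b ≠ 1 - a → a = b := by decide
  have := hx.mod_two_eq_of_eq_succ (by omega) (by omega) hsq (eq_of_ne_one_sub _ _ hne)
  omega

theorem of_isMuImageAfter (hx : SevenThirdsFree x) {o : ℕ} (hμ : IsMuImageAfter x o) :
    SevenThirdsFree fun k => x (o + 2 * k) := by
  rintro ⟨i, n, p, hp, hpn, h73, hper⟩
  refine hx ⟨o + 2 * i, 2 * n, 2 * p, by omega, by omega, by omega, fun j hj => ?_⟩
  obtain ⟨j, rfl | rfl⟩ := Nat.even_or_odd' j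
  · rw [show o + 2 * i + 2 * j = o + 2 * (i + j) by ring,
      show o + 2 * (i + j) + 2 * p = o + 2 * (i + j + p) by ring]
    exact hper j (by omega)
  · rw [show o + 2 * i + (2 * j + 1) = o + 2 * (i + j) + 1 by ring,
      show o + 2 * (i + j) + 1 + 2 * p = o + 2 * (i + j + p) + 1 by ring,
      hμ, hμ]
    exact congrArg (1 - ·) (hper j (by omega))

theorem occurs_singleton (hx : SevenThirdsFree x) (a : Fin 2) : Occurs [a] x := by
  have ⟨j, hj⟩ : ∃ j, x j = a := by
    by_contra! h
    have eq_of_ne : ∀ a b c : Fin 2, b ≠ a → c ≠ a → b = c := by decide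
    exact hx ⟨0, 3, 1, le_rfl, by norm_num, by norm_num,
      fun j _ => eq_of_ne a _ _ (h _) (h _)⟩
  exact ⟨j, fun m hm => by simp_all⟩

end SevenThirdsFree

theorem muList_length (L : List (Fin 2)) : (muList L).length = 2 * L.length := by
  simp [muList, List.length_flatMap, mul_comm]

theorem muList_getD (L : List (Fin 2)) {m : ℕ} (hm : m < L.length) :
    (muList L).getD (2 * m) 0 = L.getD m 0 ∧
      (muList L).getD (2 * m + 1) 0 = 1 - L.getD m 0 := by
  induction L generalizing m with
  | nil => simp at hm
  | cons a L ih =>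
    cases m with
    | zero => exact ⟨rfl, rfl⟩
    | succ m =>
      have := ih (Nat.lt_of_succ_lt_succ hm)
      exact ⟨by simpa [muList, Nat.mul_succ] using this.1,
        by simpa [muList, Nat.mul_succ] using this.2⟩

theorem IsMuImageAfter.occurs_muList {x : ℕ → Fin 2} {o : ℕ} (hμ : IsMuImageAfter x o)
    {L : List (Fin 2)} (hL : Occurs L fun k => x (o + 2 * k)) : Occurs (muList L) x := by
  obtain ⟨j, hj⟩ := hL
  refine ⟨o + 2 * j, fun m hm => ?_⟩
  rw [muList_length] at hm
  obtain ⟨m, rfl | rfl⟩ := Nat.even_or_odd' m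
  · rw [(muList_getD L (by omega)).1, ← hj m (by omega)]
    ring_nf
  · rw [(muList_getD L (by omega)).2, ← hj m (by omega),
      show o + 2 * j + (2 * m + 1) = o + 2 * (j + m) + 1 by ring, hμ]

/-- Every infinite 7/3-free binary word contains μ^i(0) and μ^i(1) as factors
for all i ≥ 0. -/
theorem seventhirds_free_contains_mu_powers (x : ℕ → Fin 2)
    (hx : SevenThirdsFree x) (i : ℕ) :
    Occurs (muList^[i] [0]) x ∧ Occurs (muList^[i] [1]) x := by
  induction i generalizing x with
  | zero => exact ⟨hx.occurs_singleton 0, hx.occurs_singleton 1⟩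
  | succ i ih =>
    obtain ⟨o, hμ⟩ := hx.exists_isMuImageAfter
    obtain ⟨h₀, h₁⟩ := ih _ (hx.of_isMuImageAfter hμ)
    simp only [Function.iterate_succ_apply']
    exact ⟨hμ.occurs_muList h₀, hμ.occurs_muList h₁⟩
end

section
/- Every natural number n ≥ 1 has a unique representation as a sum of distinct Fibonacci numbers F_i with i ≥ 2 such that no two consecutive Fibonacci numbers F_i and F_{i+1} both appear (Zeckendorf's theorem). -/
open List Nat

private instance : IsTrans ℕ fun a b ↦ b + 2 ≤ a where
  trans _a _b _c hba hcb := hcb.trans <| le_self_add.trans hba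

private lemma zeck_list_of_finset (s : Finset ℕ) (h2 : ∀ i ∈ s, 2 ≤ i)
    (hc : ∀ i ∈ s, i + 1 ∉ s) :
    (s.sort (· ≥ ·)).IsZeckendorfRep ∧
      ((s.sort (· ≥ ·)).map Nat.fib).sum = ∑ i ∈ s, Nat.fib i := by
  set l := s.sort (· ≥ ·) with hl
  have hnd : l.Nodup := s.sort_nodup _
  have hmem : ∀ i, i ∈ l ↔ i ∈ s := fun i => s.mem_sort _
  have hsorted : l.Pairwise (· ≥ ·) := s.pairwise_sort _
  constructor
  · rw [List.IsZeckendorfRep, List.isChain_iff_pairwise, List.pairwise_append]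
    refine ⟨?_, List.pairwise_singleton _ _, ?_⟩
    · refine List.Pairwise.imp_of_mem ?_ (hsorted.and hnd)
      intro a b ha hb hab
      have hba : b ≤ a := hab.1
      have hne : a ≠ b := hab.2
      have h1 : b + 1 ≤ a := lt_of_le_of_ne hba hne.symm
      rcases eq_or_lt_of_le h1 with h | h
      · exact absurd ((hmem a).mp ha) (h ▸ hc b ((hmem b).mp hb))
      · exact h
    · intro a ha b hb
      simp only [List.mem_singleton] at hb
      subst hb
      simpa using h2 a ((hmem a).mp ha)
  · rw [← List.sum_toFinset _ hnd, hl, Finset.sort_toFinset]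

/-- Zeckendorf's theorem: every n ≥ 1 has a unique representation as a sum of
Fibonacci numbers F_i with i ≥ 2, no two indices consecutive. -/
theorem zeckendorf (n : ℕ) (hn : 1 ≤ n) :
    ∃! s : Finset ℕ, (∀ i ∈ s, 2 ≤ i) ∧ (∀ i ∈ s, i + 1 ∉ s) ∧
      n = ∑ i ∈ s, Nat.fib i := by
  have hrep := Nat.isZeckendorfRep_zeckendorf n
  have hpw : (n.zeckendorf ++ [0]).Pairwise (fun a b ↦ b + 2 ≤ a) :=
    (List.isChain_iff_pairwise).mp hrep
  have hpw' : n.zeckendorf.Pairwise (fun a b ↦ b + 2 ≤ a) :=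
    (List.pairwise_append.mp hpw).1
  have h0 : ∀ a ∈ n.zeckendorf, 2 ≤ a := by
    intro a ha
    have := (List.pairwise_append.mp hpw).2.2 a ha 0 (List.mem_singleton_self 0)
    simpa using this
  have hnd : n.zeckendorf.Nodup :=
    hpw'.imp (fun {a b} h => by omega)
  refine ⟨n.zeckendorf.toFinset, ⟨?_, ?_, ?_⟩, ?_⟩
  · intro i hi; exact h0 i (List.mem_toFinset.mp hi)
  · intro i hi hi1
    rw [List.mem_toFinset] at hi hi1
    rcases (List.pairwise_iff_forall_sublist.mp hpw') with hfor
    -- i and i+1 both in the nodup list; one comes before the other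
    have hsym : Symmetric (fun a b : ℕ => b + 2 ≤ a ∨ a + 2 ≤ b) :=
      fun a b h => h.symm
    have := (haveI : Std.Symm (fun a b : ℕ => b + 2 ≤ a ∨ a + 2 ≤ b) := ⟨fun a b h => hsym h⟩
      List.Pairwise.forall (R := fun a b : ℕ => b + 2 ≤ a ∨ a + 2 ≤ b) (hpw'.imp fun h => Or.inl h)) hi hi1 (by omega)
    omega
  · rw [List.sum_toFinset _ hnd, Nat.sum_zeckendorf_fib]
  · rintro s ⟨h2, hc, hsum⟩
    obtain ⟨hz, hs⟩ := zeck_list_of_finset s h2 hc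
    have : n.zeckendorf = s.sort (· ≥ ·) := by
      rw [← Nat.zeckendorf_sum_fib hz, hs, ← hsum]
    rw [this, Finset.sort_toFinset]
end
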